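/- arXiv:1307.2163 — 2 statements merged into one kernel-verified Lean document; each statement's English description precedes it below -/
import Mathlib

section
/- There are no geodesic rays in DL_2(q) with exactly two turns: any infinite ray from the origin that bottoms out first in one tree T_i at depth k > 0 and then in the other tree T_{1-i} after l > 0 further steps, thereafter descending forever in T_i, fails to be a geodesic. Specifically, the vertex γ(k+2l) on such a ray can be reached from the origin by a path of length strictly less than k+2l. -/
/-- A vertex of the (q+1)-regular tree with a distinguished end, in the
horocyclic model: a height `k ∈ ℤ` together with a finitely supported
labelling of the levels strictly below `k`. -/
structure TreeVert (q : ℕ) where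
  height : ℤ
  labels : ℤ → ℕ
  labels_lt : ∀ n, labels n = 0 ∨ labels n < q
  supp_below : ∀ n, height ≤ n → labels n = 0
  fin_supp : (Function.support labels).Finite

namespace DL

variable {q d : ℕ}

/-- `v` is a child of `u` (one step further from the distinguished end). -/
abbrev treeAdjUp (u v : TreeVert q) : Prop :=
  v.height = u.height + 1 ∧ ∀ n, n ≠ u.height → v.labels n = u.labels n

/-- The (q+1)-regular tree. -/
def TreeGraph (q : ℕ) : SimpleGraph (TreeVert q) where
  Adj u v := treeAdjUp u v ∨ treeAdjUp v u
  symm := ⟨fun u v h => Or.symm h⟩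
  loopless := by
    constructor
    intro u h
    rcases h with ⟨h1, _⟩ | ⟨h1, _⟩ <;> omega

/-- The base vertex of the tree. -/
def treeOrigin (q : ℕ) : TreeVert q :=
  ⟨0, fun _ => 0, fun _ => Or.inl rfl, fun _ _ => rfl, by simp⟩

/-- Vertices of the Diestel–Leader graph `DL_d(q)`:
`d`-tuples of tree vertices whose heights sum to zero. -/
def DLVert (d q : ℕ) : Type :=
  {x : Fin d → TreeVert q // (∑ i, (x i).height) = 0}

/-- The Diestel–Leader graph `DL_d(q)`: an edge ascends in one tree and
descends in another, all other coordinates being fixed. -/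
def DLGraph (d q : ℕ) : SimpleGraph (DLVert d q) where
  Adj v w := ∃ i j : Fin d, i ≠ j ∧ treeAdjUp (v.1 i) (w.1 i) ∧ treeAdjUp (w.1 j) (v.1 j) ∧
      ∀ k : Fin d, k ≠ i → k ≠ j → v.1 k = w.1 k
  symm := by
    constructor
    rintro v w ⟨i, j, hij, h1, h2, h3⟩
    exact ⟨j, i, hij.symm, h2, h1, fun k hk1 hk2 => (h3 k hk2 hk1).symm⟩
  loopless := by
    constructor
    rintro v ⟨i, j, hij, ⟨h1, _⟩, _⟩
    omega

/-- The base point of `DL_d(q)`. -/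
def origin (d q : ℕ) : DLVert d q :=
  ⟨fun _ => treeOrigin q, by simp [treeOrigin]⟩

/-- A geodesic ray in `DL_d(q)` : an isometric embedding of `ℕ`. -/
def IsGeodesicRay (γ : ℕ → DLVert d q) : Prop :=
  ∀ m n : ℕ, m ≤ n → (DLGraph d q).dist (γ m) (γ n) = n - m

/-- Two rays are asymptotic when they stay at uniformly bounded distance. -/
def Asymptotic (γ γ' : ℕ → DLVert d q) : Prop :=
  ∃ C : ℕ, ∀ n : ℕ, (DLGraph d q).dist (γ n) (γ' n) ≤ C

instance : TopologicalSpace (DLVert d q) := ⊥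

/-- Geodesic rays emanating from the origin, with the topology of uniform
convergence on compact sets (= pointwise convergence, the vertex set being
discrete). -/
def RaySpace (d q : ℕ) : Type :=
  {γ : ℕ → DLVert d q // IsGeodesicRay γ ∧ γ 0 = origin d q}

instance : TopologicalSpace (RaySpace d q) := by
  unfold RaySpace; infer_instance

lemma reachable_origin (γ : RaySpace d q) (n : ℕ) :
    (DLGraph d q).Reachable (origin d q) (γ.1 n) := by
  cases n with
  | zero => rw [γ.2.2]
  | succ n =>
    have h := γ.2.1 0 (n + 1) (Nat.zero_le _)
    have hne : (DLGraph d q).dist (γ.1 0) (γ.1 (n + 1)) ≠ 0 := by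
      rw [h]; omega
    have := SimpleGraph.Reachable.of_dist_ne_zero hne
    rwa [γ.2.2] at this

/-- Asymptoticity as an equivalence relation on geodesic rays from the origin. -/
def asympSetoid (d q : ℕ) : Setoid (RaySpace d q) where
  r γ γ' := Asymptotic γ.1 γ'.1
  iseqv := by
    constructor
    · intro γ
      exact ⟨0, fun n => by simp [SimpleGraph.dist_self]⟩
    · rintro γ γ' ⟨C, hC⟩
      exact ⟨C, fun n => by rw [SimpleGraph.dist_comm]; exact hC n⟩
    · rintro a b c ⟨C1, h1⟩ ⟨C2, h2⟩
      refine ⟨C1 + C2, fun n => ?_⟩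
      have hab : (DLGraph d q).Reachable (a.1 n) (b.1 n) :=
        (reachable_origin a n).symm.trans (reachable_origin b n)
      have hbc : (DLGraph d q).Reachable (b.1 n) (c.1 n) :=
        (reachable_origin b n).symm.trans (reachable_origin c n)
      obtain ⟨p, hp⟩ := hab.exists_walk_length_eq_dist
      obtain ⟨p', hp'⟩ := hbc.exists_walk_length_eq_dist
      calc (DLGraph d q).dist (a.1 n) (c.1 n) ≤ (p.append p').length :=
            SimpleGraph.dist_le _
        _ = (DLGraph d q).dist (a.1 n) (b.1 n) + (DLGraph d q).dist (b.1 n) (c.1 n) := by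
            rw [SimpleGraph.Walk.length_append, hp, hp']
        _ ≤ C1 + C2 := Nat.add_le_add (h1 n) (h2 n)

/-- The visual boundary of `DL_d(q)`: asymptotic classes of geodesic rays
from the origin, with the quotient topology. -/
def Boundary (d q : ℕ) : Type := Quotient (asympSetoid d q)

instance : TopologicalSpace (Boundary d q) := by
  unfold Boundary; infer_instance

/-- A ray in `DL_2(q)` descends for exactly `n` steps in tree `i`
(bottoming out at height `-n`), then ascends forever in tree `i`.
For `n = 0` this says the ray ascends forever in tree `i` with no turn. -/
def DescendsExactly (i : Fin 2) (n : ℕ) (γ : ℕ → DLVert 2 q) : Prop :=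
  (∀ t : ℕ, t ≤ n → ((γ t).1 i).height = -(t : ℤ)) ∧
  (∀ t : ℕ, n ≤ t → ((γ t).1 i).height = (t : ℤ) - 2 * n)

/-- The subset `C_n^i` of the boundary: classes of rays bottoming out in
tree `i` after descending exactly `n` edges. -/
def Cset (q : ℕ) (i : Fin 2) (n : ℕ) : Set (Boundary 2 q) :=
  {x | ∃ γ : RaySpace 2 q, Quotient.mk (asympSetoid 2 q) γ = x ∧ DescendsExactly i n γ.1}

/-- Projection of a path in `DL_d(q)` to the `i`-th tree. -/
def proj (i : Fin d) (γ : ℕ → DLVert d q) : ℕ → TreeVert q := fun n => (γ n).1 i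

/-- Two (lazy) paths in the tree converge to the same end: both eventually
leave every ball, and they come within a uniformly bounded distance of each
other at arbitrarily late times. -/
def SameEnd (a b : ℕ → TreeVert q) : Prop :=
  (∀ R : ℕ, ∃ N : ℕ, ∀ n, N ≤ n → R ≤ (TreeGraph q).dist (a 0) (a n)) ∧
  (∀ R : ℕ, ∃ N : ℕ, ∀ n, N ≤ n → R ≤ (TreeGraph q).dist (b 0) (b n)) ∧
  (∃ C : ℕ, ∀ N : ℕ, ∃ m n, N ≤ m ∧ N ≤ n ∧ (TreeGraph q).dist (a m) (b n) ≤ C)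

/-- The step from `p m` to `p (m+1)` descends in tree `i`. -/
def StepDown (i : Fin d) (p : ℕ → DLVert d q) (m : ℕ) : Prop :=
  treeAdjUp ((p (m + 1)).1 i) ((p m).1 i)

/-- The step from `p m` to `p (m+1)` ascends in tree `i`. -/
def StepUp (i : Fin d) (p : ℕ → DLVert d q) (m : ℕ) : Prop :=
  treeAdjUp ((p m).1 i) ((p (m + 1)).1 i)

/-- A turn in tree `i`: a subpath beginning with a descent in `T_i` at step `t`,
ending with an ascent in `T_i` at step `s`, with no intervening step
involving `T_i`. -/
def IsTurn (i : Fin d) (p : ℕ → DLVert d q) (t s : ℕ) : Prop :=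
  t < s ∧ StepDown i p t ∧ StepUp i p s ∧
    ∀ m, t < m → m < s → (p (m + 1)).1 i = (p m).1 i


/-!
Write `h t` for the height of the `i`-coordinate of `γ t`, so that the `j`-coordinate has height
`-h t`. Along the ray `h` goes down from `0` to `-k`, up to `l - k` and down to `-k` again at time
`k + 2l`, so up to that time the `i`-coordinate never drops below `-k` and the `j`-coordinate never
below `-d`, where `d = max (l - k) 0`. A tree vertex keeps its labels at levels below every height
it passes through, so `γ (k + 2l)` has the origin's labels in tree `i` below `-k` and in tree `j`
below `-d`. Such a vertex is reached from the origin in `k + 2d < k + 2l` steps: go up `d` steps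
in tree `i` (down in tree `j`, along the zero labels), then down `k + d` steps in tree `i` while
climbing in tree `j` along the labels of the target.
-/

end DL

namespace TreeVert

variable {q : ℕ}

lemma ext {u v : TreeVert q} (hh : u.height = v.height) (hl : u.labels = v.labels) : u = v := by
  cases u; cases v; simp_all

/-- The ancestor of `x` at height `h ≤ x.height`; for `h > x.height`, its descendant along the
label `0`. -/
def trunc (x : TreeVert q) (h : ℤ) : TreeVert q where
  height := h
  labels n := if n < h then x.labels n else 0
  labels_lt n := by
    split_ifs
    · exact x.labels_lt n
    · exact Or.inl rfl
  supp_below n hn := if_neg (not_lt.mpr hn)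
  fin_supp := x.fin_supp.subset fun n hn => by
    by_contra h0
    exact hn (by simp [Function.notMem_support.mp h0])

@[simp] lemma trunc_height (x : TreeVert q) (h : ℤ) : (x.trunc h).height = h := rfl

lemma trunc_labels (x : TreeVert q) (h n : ℤ) :
    (x.trunc h).labels n = if n < h then x.labels n else 0 := rfl

lemma trunc_self (x : TreeVert q) : x.trunc x.height = x :=
  ext rfl <| funext fun n => by
    rw [trunc_labels]
    split_ifs with hn
    · rfl
    · exact (x.supp_below n (not_lt.mp hn)).symm

lemma trunc_congr {x y : TreeVert q} {h : ℤ} (hxy : ∀ n < h, x.labels n = y.labels n) :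
    x.trunc h = y.trunc h :=
  ext rfl <| funext fun n => by
    simp only [trunc_labels]
    split_ifs with hn
    exacts [hxy n hn, rfl]

lemma treeAdjUp_trunc (x : TreeVert q) (h : ℤ) : DL.treeAdjUp (x.trunc h) (x.trunc (h + 1)) :=
  ⟨rfl, fun n hn => by
    have hlt : n < h + 1 ↔ n < h := by rw [trunc_height] at hn; omega
    simp only [trunc_labels, hlt]⟩

end TreeVert

namespace DL

variable {q d : ℕ}

lemma labels_eq_of_adj {v w : DLVert d q} (hvw : (DLGraph d q).Adj v w) (m : Fin d) {n : ℤ}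
    (hv : n < (v.1 m).height) (hw : n < (w.1 m).height) :
    (v.1 m).labels n = (w.1 m).labels n := by
  obtain ⟨i, j, -, hup, hdown, hrest⟩ := hvw
  by_cases hmi : m = i
  · subst hmi
    exact (hup.2 n hv.ne).symm
  by_cases hmj : m = j
  · subst hmj
    exact hdown.2 n hw.ne
  · rw [hrest m hmi hmj]

lemma labels_eq_of_lt_height {γ : ℕ → DLVert d q} {N : ℕ}
    (hγ : ∀ t < N, (DLGraph d q).Adj (γ t) (γ (t + 1))) (m : Fin d) {n : ℤ}
    (hn : ∀ t ≤ N, n < ((γ t).1 m).height) :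
    ((γ N).1 m).labels n = ((γ 0).1 m).labels n := by
  induction N with
  | zero => rfl
  | succ N ih =>
    rw [← labels_eq_of_adj (hγ N N.lt_succ_self) m (hn N N.le_succ) (hn (N + 1) le_rfl)]
    exact ih (fun t ht => hγ t (by omega)) (fun t ht => hn t (by omega))

section DLTwo

variable {i j : Fin 2}

lemma fin_two_eq_or_eq (hij : i ≠ j) (m : Fin 2) : m = i ∨ m = j := by
  omega

lemma height_eq_neg_height (hij : i ≠ j) (v : DLVert 2 q) :
    (v.1 j).height = -(v.1 i).height := by
  have hv := v.2
  rw [Fin.sum_univ_two] at hv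
  fin_cases i <;> fin_cases j <;> simp_all <;> omega

lemma DLVert.ext_of_ne (hij : i ≠ j) {v w : DLVert 2 q} (hi : v.1 i = w.1 i)
    (hj : v.1 j = w.1 j) : v = w :=
  Subtype.ext <| funext fun m => by
    rcases fin_two_eq_or_eq hij m with rfl | rfl <;> assumption

lemma adj_of_treeAdjUp (hij : i ≠ j) {v w : DLVert 2 q} (hi : treeAdjUp (v.1 i) (w.1 i))
    (hj : treeAdjUp (w.1 j) (v.1 j)) : (DLGraph 2 q).Adj v w :=
  ⟨i, j, hij, hi, hj, fun m hmi hmj => ((fin_two_eq_or_eq hij m).elim hmi hmj).elim⟩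

def pairVert (i : Fin 2) (a b : TreeVert q) (h : a.height + b.height = 0) : DLVert 2 q :=
  ⟨fun m => if m = i then a else b, by
    rw [Fin.sum_univ_two]
    fin_cases i <;> simp <;> omega⟩

lemma pairVert_apply_self (a b : TreeVert q) (h : a.height + b.height = 0) :
    (pairVert i a b h).1 i = a :=
  if_pos rfl

lemma pairVert_apply_of_ne (hij : i ≠ j) (a b : TreeVert q) (h : a.height + b.height = 0) :
    (pairVert i a b h).1 j = b :=
  if_neg hij.symm

lemma exists_walk_trunc (hij : i ≠ j) (a b : TreeVert q) {h₁ h₂ : ℤ} (n : ℕ)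
    (hn : h₂ + n = h₁) {v w : DLVert 2 q} (hvi : v.1 i = a.trunc h₁)
    (hvj : v.1 j = b.trunc (-h₁)) (hwi : w.1 i = a.trunc h₂) (hwj : w.1 j = b.trunc (-h₂)) :
    ∃ p : (DLGraph 2 q).Walk v w, p.length = n := by
  induction n generalizing h₁ v with
  | zero =>
    obtain rfl : h₁ = h₂ := by simpa using hn.symm
    obtain rfl : v = w := DLVert.ext_of_ne hij (hvi.trans hwi.symm) (hvj.trans hwj.symm)
    exact ⟨.nil, rfl⟩
  | succ n ih =>
    let u := pairVert i (a.trunc (h₂ + n)) (b.trunc (-(h₂ + n))) (by simp)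
    obtain ⟨p, hp⟩ := ih rfl (pairVert_apply_self ..) (pairVert_apply_of_ne hij ..)
    have hh₁ : h₁ = h₂ + n + 1 := by rw [← hn]; push_cast; ring
    have hvu : (DLGraph 2 q).Adj v u := by
      refine adj_of_treeAdjUp hij.symm ?_ ?_
      · rw [hvj, pairVert_apply_of_ne hij, hh₁, show -(h₂ + n) = -(h₂ + n + 1) + 1 by ring]
        exact TreeVert.treeAdjUp_trunc b _
      · rw [hvi, pairVert_apply_self, hh₁]
        exact TreeVert.treeAdjUp_trunc a _
    exact ⟨.cons hvu p, by rw [SimpleGraph.Walk.length_cons, hp]⟩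

lemma dist_origin_le (hij : i ≠ j) {x : DLVert 2 q} {k d : ℕ} (hxh : (x.1 i).height = -k)
    (hxi : ∀ n < -(k : ℤ), (x.1 i).labels n = 0)
    (hxj : ∀ n < -(d : ℤ), (x.1 j).labels n = 0) :
    (DLGraph 2 q).dist (origin 2 q) x ≤ k + 2 * d := by
  set O := treeOrigin q
  set y := x.1 j
  have hO : O.trunc 0 = O := O.trunc_self
  have hxO : x.1 i = O.trunc (-k) := by
    rw [← (x.1 i).trunc_self, hxh]
    exact TreeVert.trunc_congr hxi
  have hy : y.trunc k = y := by
    rw [← neg_neg (k : ℤ), ← hxh, ← height_eq_neg_height hij]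
    exact y.trunc_self
  have hOy : O.trunc (-d) = y.trunc (-d) := TreeVert.trunc_congr fun n hn => (hxj n hn).symm
  let mid := pairVert i (O.trunc d) (y.trunc (-d)) (by simp)
  obtain ⟨p₁, hp₁⟩ := exists_walk_trunc hij.symm O O d (h₁ := 0) (h₂ := -d) (by ring)
    (v := origin 2 q) (w := mid) hO.symm (by rw [neg_zero, hO]; rfl)
    (by rw [pairVert_apply_of_ne hij, hOy]) (by rw [neg_neg, pairVert_apply_self])
  obtain ⟨p₂, hp₂⟩ := exists_walk_trunc hij O y (k + d) (h₁ := d) (h₂ := -k)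
    (by push_cast; ring) (v := mid) (w := x) (pairVert_apply_self ..)
    (pairVert_apply_of_ne hij ..) hxO (by rw [neg_neg, hy])
  calc (DLGraph 2 q).dist (origin 2 q) x ≤ (p₁.append p₂).length := SimpleGraph.dist_le _
    _ = k + 2 * d := by rw [SimpleGraph.Walk.length_append, hp₁, hp₂]; ring

end DLTwo

lemma down_up_down_bounds {f : ℕ → ℤ} {k l : ℕ} (h0 : f 0 = 0)
    (hdown₁ : ∀ t, t < k → f (t + 1) = f t - 1)
    (hup : ∀ t, k ≤ t → t < k + l → f (t + 1) = f t + 1)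
    (hdown₂ : ∀ t, k + l ≤ t → f (t + 1) = f t - 1) :
    f (k + 2 * l) = -k ∧ ∀ t ≤ k + 2 * l, -(k : ℤ) ≤ f t ∧ f t ≤ (l - k : ℕ) := by
  have hf : ∀ t, f t =
      if t ≤ k then -(t : ℤ) else if t ≤ k + l then t - 2 * k else 2 * l - t := by
    intro t
    induction t with
    | zero => simpa using h0
    | succ t ih =>
      rcases lt_or_ge t k with ht | ht
      · rw [hdown₁ t ht, ih]; split_ifs <;> push_cast <;> omega
      rcases lt_or_ge t (k + l) with ht' | ht'
      · rw [hup t ht ht', ih]; split_ifs <;> push_cast <;> omega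
      · rw [hdown₂ t ht', ih]; split_ifs <;> push_cast <;> omega
  refine ⟨?_, fun t ht => ?_⟩ <;> rw [hf] <;> split_ifs <;> omega

theorem no_two_turn_rays_general {q : ℕ} (i : Fin 2) (γ : ℕ → DLVert 2 q)
    (h0 : γ 0 = origin 2 q)
    (hpath : ∀ n : ℕ, (DLGraph 2 q).Adj (γ n) (γ (n + 1)))
    (k l : ℕ) (hk : 0 < k) (hl : 0 < l)
    (hdesc1 : ∀ t, t < k → ((γ (t + 1)).1 i).height = ((γ t).1 i).height - 1)
    (hasc : ∀ t, k ≤ t → t < k + l → ((γ (t + 1)).1 i).height = ((γ t).1 i).height + 1)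
    (hdesc2 : ∀ t, k + l ≤ t → ((γ (t + 1)).1 i).height = ((γ t).1 i).height - 1) :
    (DLGraph 2 q).dist (origin 2 q) (γ (k + 2 * l)) < k + 2 * l := by
  obtain ⟨j, hij⟩ : ∃ j, i ≠ j := ⟨i.rev, by fin_cases i <;> decide⟩
  obtain ⟨hend, hbounds⟩ := down_up_down_bounds (f := fun t => ((γ t).1 i).height)
    (by rw [h0]; rfl) hdesc1 hasc hdesc2
  have hlabels : ∀ m n, (∀ t ≤ k + 2 * l, n < ((γ t).1 m).height) →
      ((γ (k + 2 * l)).1 m).labels n = 0 := fun m n hn => by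
    rw [labels_eq_of_lt_height (fun t _ => hpath t) m hn, h0]
    rfl
  calc (DLGraph 2 q).dist (origin 2 q) (γ (k + 2 * l)) ≤ k + 2 * (l - k) :=
        dist_origin_le hij hend
          (fun n hn => hlabels i n fun t ht => by linarith [(hbounds t ht).1])
          (fun n hn => hlabels j n fun t ht => by
            rw [height_eq_neg_height hij]; linarith [(hbounds t ht).2])
    _ < k + 2 * l := by omega

/-- there are no 2-turn geodesic rays in `DL_2(q)`. Any ray from
the origin which descends `k > 0` steps in tree `i`, then ascends `l > 0`
steps in tree `i` (i.e. bottoms out in the other tree), and thereafter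
descends in tree `i` forever, reaches `γ (k + 2l)` non-geodesically: the
vertex `γ (k + 2l)` is at distance strictly less than `k + 2l` from the
origin. -/
theorem no_two_turn_rays {q : ℕ} (hq : 2 ≤ q) (i : Fin 2) (γ : ℕ → DLVert 2 q)
    (h0 : γ 0 = origin 2 q)
    (hpath : ∀ n : ℕ, (DLGraph 2 q).Adj (γ n) (γ (n + 1)))
    (k l : ℕ) (hk : 0 < k) (hl : 0 < l)
    (hdesc1 : ∀ t, t < k → ((γ (t + 1)).1 i).height = ((γ t).1 i).height - 1)
    (hasc : ∀ t, k ≤ t → t < k + l → ((γ (t + 1)).1 i).height = ((γ t).1 i).height + 1)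
    (hdesc2 : ∀ t, k + l ≤ t → ((γ (t + 1)).1 i).height = ((γ t).1 i).height - 1) :
    (DLGraph 2 q).dist (origin 2 q) (γ (k + 2 * l)) < k + 2 * l :=
  no_two_turn_rays_general i γ h0 hpath k l hk hl hdesc1 hasc hdesc2

end DL
end

section
/- The visual boundary ∂DL_2(q) is compact. -/
namespace DL

variable {q d : ℕ}

/-!
The vertices at distance at most `n` from the origin all lie in a finite "box" (heights in
`[-n, n]`, labels supported in `[-n, n)`), so the space of geodesic rays from the origin is
a closed subset of the compact product `∏ₙ box n` of finite discrete sets, hence compact.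
The boundary is a quotient of it.
-/

lemma TreeVert.ext {q : ℕ} {a b : TreeVert q} (h_height : a.height = b.height)
    (h_labels : a.labels = b.labels) : a = b := by
  cases a; cases b; simp_all

def treeBox (q n : ℕ) : Set (TreeVert q) :=
  {t | t.height.natAbs ≤ n ∧ ∀ m : ℤ, m < -(n : ℤ) → t.labels m = 0}

lemma treeBox_mono (q : ℕ) : Monotone (treeBox q) := fun _ _ hnk _ ht =>
  ⟨ht.1.trans hnk, fun m hm => ht.2 m (by omega)⟩

lemma labels_eq_zero_of_mem_treeBox {q n : ℕ} {t : TreeVert q} (ht : t ∈ treeBox q n)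
    {m : ℤ} (hm : m ∉ Set.Ico (-(n : ℤ)) n) : t.labels m = 0 := by
  rw [Set.mem_Ico, not_and_or, not_le, not_lt] at hm
  rcases hm with hm | hm
  · exact ht.2 m hm
  · exact t.supp_below m (by have := ht.1; omega)

lemma treeBox_finite (q n : ℕ) : (treeBox q n).Finite := by
  let I := Set.Ico (-(n : ℤ)) n
  let code : TreeVert q → ℤ × (I → ℕ) := fun t => (t.height, fun m => t.labels m)
  have h_inj : Set.InjOn code (treeBox q n) := by
    intro a ha b hb hab
    simp only [code, Prod.mk.injEq] at hab
    refine TreeVert.ext hab.1 (funext fun m => ?_)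
    by_cases hm : m ∈ I
    · exact congrFun hab.2 ⟨m, hm⟩
    · rw [labels_eq_zero_of_mem_treeBox ha hm, labels_eq_zero_of_mem_treeBox hb hm]
  have h_maps : code '' treeBox q n ⊆
      Set.Icc (-(n : ℤ)) n ×ˢ Set.pi Set.univ fun _ : I => Set.Iic q := by
    rintro _ ⟨t, ht, rfl⟩
    dsimp only [code]
    refine ⟨by have := ht.1; constructor <;> omega, fun m _ => ?_⟩
    rcases t.labels_lt m with h | h <;> simp only [Set.mem_Iic] <;> omega
  exact Set.Finite.of_finite_image
    (((Set.finite_Icc _ _).prod (Set.Finite.pi fun _ => Set.finite_Iic _)).subset h_maps) h_inj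

def dlBox (d q n : ℕ) : Set (DLVert d q) :=
  {v | ∀ i, v.1 i ∈ treeBox q n}

lemma dlBox_finite (d q n : ℕ) : (dlBox d q n).Finite :=
  Set.Finite.of_finite_image
    ((Set.Finite.pi fun _ => treeBox_finite q n).subset (by
      rintro _ ⟨v, hv, rfl⟩ i _
      exact hv i))
    Subtype.val_injective.injOn

lemma mem_dlBox_succ_of_adj {n : ℕ} {v w : DLVert d q} (hv : v ∈ dlBox d q n)
    (h : (DLGraph d q).Adj v w) : w ∈ dlBox d q (n + 1) := by
  obtain ⟨i, j, -, h_up, h_down, h_fixed⟩ := h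
  intro k
  have hk := (hv k).1
  by_cases hki : k = i
  · subst hki
    refine ⟨by omega, fun m hm => ?_⟩
    rw [h_up.2 m (by omega)]
    exact (hv k).2 m (by omega)
  by_cases hkj : k = j
  · subst hkj
    refine ⟨by omega, fun m hm => ?_⟩
    rw [← h_down.2 m (by omega)]
    exact (hv k).2 m (by omega)
  rw [← h_fixed k hki hkj]
  exact treeBox_mono q n.le_succ (hv k)

lemma IsGeodesicRay.mem_dlBox {γ : ℕ → DLVert d q} (hγ : IsGeodesicRay γ)
    (h_origin : γ 0 = origin d q) (n : ℕ) : γ n ∈ dlBox d q n := by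
  induction n with
  | zero =>
    rw [h_origin]
    exact fun _ => ⟨by simp [origin, treeOrigin], fun _ _ => rfl⟩
  | succ n ih =>
    have h_dist : (DLGraph d q).dist (γ n) (γ (n + 1)) = 1 := by
      simpa using hγ n (n + 1) n.le_succ
    exact mem_dlBox_succ_of_adj ih (SimpleGraph.dist_eq_one_iff_adj.mp h_dist)

instance : DiscreteTopology (DLVert d q) := ⟨rfl⟩

lemma isClosed_setOf_isGeodesicRay : IsClosed {γ : ℕ → DLVert d q | IsGeodesicRay γ} := by
  simp only [IsGeodesicRay, Set.ofPred_forall]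
  refine isClosed_iInter fun m => isClosed_iInter fun n => isClosed_iInter fun _ => ?_
  exact (isClosed_discrete
      {x : DLVert d q × DLVert d q | (DLGraph d q).dist x.1 x.2 = n - m}).preimage
    (f := fun γ : ℕ → DLVert d q => (γ m, γ n)) ((continuous_apply m).prodMk (continuous_apply n))

instance : CompactSpace (RaySpace d q) := by
  refine isCompact_iff_compactSpace.mp (IsCompact.of_isClosed_subset
    (isCompact_univ_pi fun n => (dlBox_finite d q n).isCompact) ?_ ?_)
  · exact isClosed_setOf_isGeodesicRay.inter (isClosed_eq (continuous_apply 0) continuous_const)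
  · exact fun γ hγ n _ => hγ.1.mem_dlBox hγ.2 n

theorem boundary_compact_general {q : ℕ} :
    CompactSpace (Boundary 2 q) :=
  Quotient.compactSpace

/-- the visual boundary of `DL_2(q)` is compact. -/
theorem boundary_compact {q : ℕ} (hq : 2 ≤ q) :
    CompactSpace (Boundary 2 q) :=
  boundary_compact_general

end DL
end
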